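/- The past mask P_{[a,b]} m is sufficient for the globally context: for any three-valued signal s and any time t with m(t) = true, G_{[a,b]}(s|_{P_{[a,b]}m})(t) = G_{[a,b]}(s)(t). -/

import Mathlib

inductive TV : Type | T | F | U
deriving DecidableEq

open TV Set Pointwise

def maskApply (s : ℝ → TV) (m : ℝ → Bool) : ℝ → TV :=
  fun t => if m t then s t else TV.U

def tvNot : TV → TV
  | TV.T => TV.F | TV.F => TV.T | TV.U => TV.U

def tvOr : TV → TV → TV
  | TV.T, _ => TV.T
  | _, TV.T => TV.T
  | TV.F, TV.F => TV.F
  | _, _ => TV.U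

def tvAnd : TV → TV → TV
  | TV.F, _ => TV.F
  | _, TV.F => TV.F
  | TV.T, TV.T => TV.T
  | _, _ => TV.U

open Classical in
noncomputable def evOp (a b : ℝ) (s : ℝ → TV) : ℝ → TV :=
  fun t =>
    if ∃ t' ∈ Set.Icc (t + a) (t + b), s t' = TV.T then TV.T
    else if ∀ t' ∈ Set.Icc (t + a) (t + b), s t' = TV.F then TV.F
    else TV.U

open Classical in
noncomputable def glOp (a b : ℝ) (s : ℝ → TV) : ℝ → TV :=
  fun t =>
    if ∃ t' ∈ Set.Icc (t + a) (t + b), s t' = TV.F then TV.F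
    else if ∀ t' ∈ Set.Icc (t + a) (t + b), s t' = TV.T then TV.T
    else TV.U

open Classical in
noncomputable def pastMask (a b : ℝ) (m : ℝ → Bool) : ℝ → Bool :=
  fun t => decide (∃ t'' ∈ Set.Icc (t - b) (t - a) ∩ Set.Ici (0:ℝ), m t'' = true)

def orMask (s : ℝ → TV) : ℝ → Bool := fun t => !(s t == TV.T)

def andMask (s : ℝ → TV) : ℝ → Bool := fun t => !(s t == TV.F)

def Hset (a b : ℝ) (S : Set ℝ) : Set ℝ := {t | Set.Icc (t - b) (t - a) ⊆ S}

def Pset (a b : ℝ) (S : Set ℝ) : Set ℝ := {t | ∃ t' ∈ Set.Icc (t - b) (t - a), t' ∈ S}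

/-! `G_[a,b] s` at `t` only reads `s` on `[t+a, t+b]`, and every `t'` there has `t` in its
past window `[t'-b, t'-a]`, so when `m t` holds the past mask is true on the whole window and
masking changes nothing that the operator reads. -/

theorem glOp_congr {a b : ℝ} {s s' : ℝ → TV} {t : ℝ}
    (h : Set.EqOn s s' (Set.Icc (t + a) (t + b))) : glOp a b s t = glOp a b s' t := by
  have hF : (∃ t' ∈ Set.Icc (t + a) (t + b), s t' = TV.F) ↔
      ∃ t' ∈ Set.Icc (t + a) (t + b), s' t' = TV.F :=
    exists_congr fun _ => and_congr_right fun ht' => by rw [h ht']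
  have hT : (∀ t' ∈ Set.Icc (t + a) (t + b), s t' = TV.T) ↔
      ∀ t' ∈ Set.Icc (t + a) (t + b), s' t' = TV.T :=
    forall_congr' fun _ => imp_congr_right fun ht' => by rw [h ht']
  simp only [glOp]
  rw [hF, hT]

theorem maskApply_of_mask {s : ℝ → TV} {m : ℝ → Bool} {t : ℝ} (hm : m t = true) :
    maskApply s m t = s t :=
  if_pos hm

theorem pastMask_of_mem_Icc {a b : ℝ} {m : ℝ → Bool} {t t' : ℝ} (ht : 0 ≤ t) (hm : m t = true)
    (ht' : t' ∈ Set.Icc (t + a) (t + b)) : pastMask a b m t' = true := by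
  simp only [pastMask, decide_eq_true_eq]
  exact ⟨t, ⟨⟨by linarith [ht'.2], by linarith [ht'.1]⟩, ht⟩, hm⟩

theorem pastMask_sufficient_globally_general (a b : ℝ)
    (m : ℝ → Bool) (s : ℝ → TV) (t : ℝ) (ht : 0 ≤ t) (hm : m t = true) :
    glOp a b (maskApply s (pastMask a b m)) t = glOp a b s t :=
  glOp_congr fun _ ht' => maskApply_of_mask (pastMask_of_mem_Icc ht hm ht')

theorem pastMask_sufficient_globally (a b : ℝ) (ha : 0 ≤ a) (hab : a ≤ b)
    (m : ℝ → Bool) (s : ℝ → TV) (t : ℝ) (ht : 0 ≤ t) (hm : m t = true) :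
    glOp a b (maskApply s (pastMask a b m)) t = glOp a b s t :=
  pastMask_sufficient_globally_general a b m s t ht hm
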